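/- arXiv:2502.09794 — 3 statements merged into one kernel-verified Lean document; each statement's English description precedes it below -/
import Mathlib

section
/- Let w ≥ 1, set γ(w) := ⌈log₂(24w)⌉ and j*(w) := ⌊4w⌋ - 1. Define h(x) := log(24w · 𝟙{x ≤ j*(w)} + (12/5)² (x+1) · 𝟙{x > j*(w)}) / log(x+1). Then h is nonincreasing on [1, ∞). -/
theorem h_antitoneOn (w : ℝ) (hw : 1 ≤ w) :
    AntitoneOn
      (fun x : ℝ =>
        Real.log ((if x ≤ (⌊4 * w⌋ : ℝ) - 1 then 24 * w else 0) +
            (if (⌊4 * w⌋ : ℝ) - 1 < x then (12 / 5) ^ 2 * (x + 1) else 0)) /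
          Real.log (x + 1))
      (Set.Ici 1) := by
  intro x hx y hy hxy
  simp only [Set.mem_Ici] at hx hy
  have hF4 : (4 : ℝ) ≤ (⌊4 * w⌋ : ℝ) := by
    have : (4 : ℤ) ≤ ⌊4 * w⌋ := Int.le_floor.mpr (by push_cast; linarith)
    exact_mod_cast this
  have hFle : (⌊4 * w⌋ : ℝ) ≤ 4 * w := Int.floor_le _
  have hlx : 0 < Real.log (x + 1) := Real.log_pos (by linarith)
  have hly : 0 < Real.log (y + 1) := Real.log_pos (by linarith)
  have hlxy : Real.log (x + 1) ≤ Real.log (y + 1) :=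
    Real.log_le_log (by linarith) (by linarith)
  have hc0 : (0 : ℝ) < (12 / 5 : ℝ) ^ 2 := by norm_num
  have hlc : 0 ≤ Real.log ((12 / 5 : ℝ) ^ 2) := Real.log_nonneg (by norm_num)
  have h24 : 0 ≤ Real.log (24 * w) := Real.log_nonneg (by linarith)
  simp only
  by_cases hxj : x ≤ (⌊4 * w⌋ : ℝ) - 1
  · by_cases hyj : y ≤ (⌊4 * w⌋ : ℝ) - 1
    · rw [if_pos hxj, if_neg (not_lt.mpr hxj), if_pos hyj, if_neg (not_lt.mpr hyj)]
      simp only [add_zero]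
      gcongr
    · -- x ≤ j < y
      push_neg at hyj
      rw [if_pos hxj, if_neg (not_lt.mpr hxj), if_neg (not_le.mpr hyj), if_pos hyj,
        add_zero, zero_add]
      rw [div_le_div_iff₀ hly hlx]
      have hsplit : Real.log ((12 / 5 : ℝ) ^ 2 * (y + 1)) =
          Real.log ((12 / 5 : ℝ) ^ 2) + Real.log (y + 1) :=
        Real.log_mul (by positivity) (by linarith)
      rw [hsplit]
      have ha : Real.log (x + 1) ≤ Real.log (⌊4 * w⌋ : ℝ) :=
        Real.log_le_log (by linarith) (by linarith)
      have hb : Real.log (⌊4 * w⌋ : ℝ) ≤ Real.log (y + 1) :=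
        Real.log_le_log (by linarith) (by linarith)
      have hℓ0 : 0 ≤ Real.log (⌊4 * w⌋ : ℝ) := Real.log_nonneg (by linarith)
      have hkey : Real.log ((12 / 5 : ℝ) ^ 2) + Real.log (⌊4 * w⌋ : ℝ) ≤
          Real.log (24 * w) := by
        rw [← Real.log_mul (by positivity) (by linarith)]
        apply Real.log_le_log (by positivity)
        nlinarith
      nlinarith [mul_nonneg hlc (sub_nonneg.mpr hb),
        mul_nonneg (add_nonneg hlc hly.le) (sub_nonneg.mpr ha)]
  · -- j < x ≤ y
    push_neg at hxj
    have hyj : (⌊4 * w⌋ : ℝ) - 1 < y := lt_of_lt_of_le hxj hxy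
    rw [if_neg (not_le.mpr hxj), if_pos hxj, if_neg (not_le.mpr hyj), if_pos hyj,
      zero_add, zero_add]
    rw [div_le_div_iff₀ hly hlx]
    rw [Real.log_mul (by positivity) (by linarith),
      Real.log_mul (by positivity) (by linarith)]
    nlinarith [mul_nonneg hlc (sub_nonneg.mpr hlxy)]
end

section
/- Let w ≥ 1 and γ(w) := ⌈log₂(24w)⌉. Then for every real x ≥ 1, 24w · 𝟙{1 ≤ x ≤ ⌊4w⌋-1} + (12/5)²(x+1) · 𝟙{x > ⌊4w⌋-1} ≤ (x+1)^{γ(w)}. -/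
theorem indicator_le_pow_gamma (w : ℝ) (hw : 1 ≤ w) (x : ℝ) (hx : 1 ≤ x) :
    (if x ≤ (⌊4 * w⌋ : ℝ) - 1 then 24 * w else 0) +
      (if (⌊4 * w⌋ : ℝ) - 1 < x then (12 / 5) ^ 2 * (x + 1) else 0) ≤
      (x + 1) ^ ((⌈Real.logb 2 (24 * w)⌉ : ℝ)) := by
  have h24 : (0:ℝ) < 24 * w := by linarith
  have hxp : (0:ℝ) < x + 1 := by linarith
  have hx2 : (2:ℝ) ≤ x + 1 := by linarith
  have h4lt : (4:ℝ) < Real.logb 2 (24 * w) := by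
    rw [Real.lt_logb_iff_rpow_lt (by norm_num) h24]
    have : (2:ℝ) ^ (4:ℝ) = 16 := by
      rw [show (4:ℝ) = ((4:ℕ):ℝ) by norm_num, Real.rpow_natCast]; norm_num
    rw [this]; linarith
  set g : ℤ := ⌈Real.logb 2 (24 * w)⌉ with hgdef
  have hg5 : (5:ℤ) ≤ g := by
    have : (4:ℤ) < g := Int.lt_ceil.mpr (by exact_mod_cast h4lt)
    omega
  have hgc : (5:ℝ) ≤ (g:ℝ) := by exact_mod_cast hg5
  have hle : Real.logb 2 (24 * w) ≤ (g:ℝ) := Int.le_ceil _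
  rcases le_or_gt x ((⌊4 * w⌋ : ℝ) - 1) with h | h
  · rw [if_pos h, if_neg (not_lt.mpr h), add_zero]
    have h1 : 24 * w = (2:ℝ) ^ Real.logb 2 (24 * w) :=
      (Real.rpow_logb (by norm_num) (by norm_num) h24).symm
    have h2 : (2:ℝ) ^ Real.logb 2 (24 * w) ≤ (2:ℝ) ^ (g:ℝ) :=
      Real.rpow_le_rpow_of_exponent_le (by norm_num) hle
    have h3 : (2:ℝ) ^ (g:ℝ) ≤ (x + 1) ^ (g:ℝ) :=
      Real.rpow_le_rpow (by norm_num) hx2 (by linarith)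
    linarith
  · rw [if_neg (not_le.mpr h), if_pos h, zero_add]
    have hsplit : (x + 1) ^ ((g:ℝ) - 1) * (x + 1) = (x + 1) ^ (g:ℝ) := by
      rw [Real.rpow_sub_one hxp.ne', div_mul_cancel₀ _ hxp.ne']
    rw [← hsplit]
    have h2 : (2:ℝ) ^ ((4:ℝ)) ≤ (x + 1) ^ ((g:ℝ) - 1) := by
      calc (2:ℝ) ^ (4:ℝ) ≤ (2:ℝ) ^ ((g:ℝ) - 1) :=
            Real.rpow_le_rpow_of_exponent_le (by norm_num) (by linarith)
        _ ≤ (x + 1) ^ ((g:ℝ) - 1) :=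
            Real.rpow_le_rpow (by norm_num) hx2 (by linarith)
    have h16 : (2:ℝ) ^ (4:ℝ) = 16 := by
      rw [show (4:ℝ) = ((4:ℕ):ℝ) by norm_num, Real.rpow_natCast]; norm_num
    have : (12/5:ℝ)^2 ≤ (x + 1) ^ ((g:ℝ) - 1) := by rw [h16] at h2; nlinarith
    nlinarith
end

section
/- Let γ ∈ ℕ with γ ≥ 2 and n ∈ ℕ with n ≥ 2. Then (∑_{k=0}^{n-1} (2k+1))^γ ≥ 4^{γ-1} + ∑_{k=1}^{n-1} (2k+1)^γ. -/
/-! Induction on `n ≥ 2`: the base case is `4^(γ-1) + 3^γ ≤ 4^γ`, and each step adds `(2n+1)^γ` on the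
left and passes from `S^γ` to `(S + (2n+1))^γ` on the right, which is at least `S^γ + (2n+1)^γ`. -/

theorem four_pow_pred_add_three_pow_le_four_pow {γ : ℕ} (hγ : γ ≠ 0) :
    4 ^ (γ - 1) + 3 ^ γ ≤ 4 ^ γ := by
  obtain ⟨m, rfl⟩ := Nat.exists_eq_succ_of_ne_zero hγ
  have h34 : 3 ^ m ≤ 4 ^ m := Nat.pow_le_pow_left (by norm_num) m
  rw [Nat.succ_sub_one, pow_succ, pow_succ]
  omega

theorem pascal_sum_ineq (γ n : ℕ) (hγ : 2 ≤ γ) (hn : 2 ≤ n) :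
    4 ^ (γ - 1) + ∑ k ∈ Finset.Icc 1 (n - 1), (2 * k + 1) ^ γ ≤
      (∑ k ∈ Finset.range n, (2 * k + 1)) ^ γ := by
  have hγ0 : γ ≠ 0 := by omega
  induction n, hn using Nat.le_induction with
  | base => simpa [Finset.sum_range_succ] using four_pow_pred_add_three_pow_le_four_pow hγ0
  | succ n hn ih =>
    obtain ⟨m, rfl⟩ := Nat.exists_eq_add_of_le' (show 1 ≤ n by omega)
    rw [Nat.add_sub_cancel] at ih
    rw [Nat.add_sub_cancel, Finset.sum_Icc_succ_top (by omega), Finset.sum_range_succ]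
    calc 4 ^ (γ - 1) + (∑ k ∈ Finset.Icc 1 m, (2 * k + 1) ^ γ + (2 * (m + 1) + 1) ^ γ)
        ≤ (∑ k ∈ Finset.range (m + 1), (2 * k + 1)) ^ γ + (2 * (m + 1) + 1) ^ γ := by
          rw [← add_assoc]; exact Nat.add_le_add_right ih _
      _ ≤ _ := pow_add_pow_le (Nat.zero_le _) (Nat.zero_le _) hγ0
end
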